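/- For fixed α with 1/2 < α and integers 2 ≤ K < K', if α < K then d_{K'}(α) < d_K(α); i.e., the per-user GDoF under finite precision CSIT is strictly decreasing in the number of users K for every α in (1/2, K). -/

import Mathlib

noncomputable def dK (K : ℕ) (α : ℝ) : ℝ :=
  if α ≤ 1/2 then 1 - α
  else if α ≤ (K : ℝ)/((K : ℝ)+1) then ((K : ℝ)-2-((K : ℝ)-3)*α)/((K : ℝ)-1)
  else if α ≤ 1 then 1 - (((K : ℝ)-1)/(K : ℝ))*α
  else if α ≤ (K : ℝ) then α/(K : ℝ)
  else 1

/-!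
On `(1/2, 1]` the two middle pieces of `d_K` are `1 - α + (2α - 1)/(K - 1)` and `1 - α + α/K`,
and `d_K` is their minimum (they cross exactly at `α = K/(K+1)`); on `(1, K]` it is `α/K`.
Every one of these expressions is strictly decreasing in `K` once `α > 1/2`.
-/

lemma dK_eq_one_sub_add_min {K : ℕ} (hK : 2 ≤ K) {α : ℝ} (hα : 1/2 < α) (hα1 : α ≤ 1) :
    dK K α = 1 - α + min ((2 * α - 1) / (K - 1)) (α / K) := by
  have hK2 : (2 : ℝ) ≤ K := by exact_mod_cast hK
  have hK1 : (0 : ℝ) < K - 1 := by linarith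
  have hKpos : (0 : ℝ) < K := by linarith
  have hcross : (2 * α - 1) / (K - 1) ≤ α / K ↔ α ≤ K / (K + 1) := by
    rw [div_le_div_iff₀ hK1 hKpos, le_div_iff₀ (by linarith)]
    constructor <;> intro h <;> nlinarith
  rw [dK, if_neg (not_le.2 hα)]
  split_ifs with h2
  · rw [min_eq_left (hcross.2 h2)]
    field_simp
    ring
  · rw [min_eq_right (le_of_lt (not_le.1 (mt hcross.1 h2)))]
    field_simp
    ring

lemma dK_of_one_lt_of_le {K : ℕ} {α : ℝ} (hα : 1 < α) (hαK : α ≤ K) : dK K α = α / K := by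
  have hfrac : (K : ℝ) / (K + 1) < α :=
    ((div_lt_one (by positivity)).2 (lt_add_one _)).trans hα
  rw [dK, if_neg (by linarith), if_neg (not_le.2 hfrac), if_neg (not_le.2 hα), if_pos hαK]

theorem dK_strict_decreasing_in_K (α : ℝ) (hα : 1/2 < α) (K K' : ℕ)
    (hK : 2 ≤ K) (hKK' : K < K') (hαK : α < (K : ℝ)) :
    dK K' α < dK K α := by
  have hK2 : (2 : ℝ) ≤ K := by exact_mod_cast hK
  have hKK'ℝ : (K : ℝ) < K' := by exact_mod_cast hKK'
  have hKpos : (0 : ℝ) < K := by linarith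
  rcases le_or_gt α 1 with hα1 | hα1
  · rw [dK_eq_one_sub_add_min (hK.trans hKK'.le) hα hα1, dK_eq_one_sub_add_min hK hα hα1]
    refine add_lt_add_right (min_lt_min ?_ ?_) _
    · exact div_lt_div_of_pos_left (by linarith) (by linarith) (by linarith)
    · exact div_lt_div_of_pos_left (by linarith) hKpos hKK'ℝ
  · rw [dK_of_one_lt_of_le hα1 (by linarith), dK_of_one_lt_of_le hα1 hαK.le]
    exact div_lt_div_of_pos_left (by linarith) hKpos hKK'ℝ
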